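/- arXiv:2001.11159 — 8 statements merged into one kernel-verified Lean document; each statement's English description precedes it below -/
import Mathlib

section
/- Let a < b < c be real numbers and let f : ℝ → ℝ be continuous on [a, c], concave on [a, b], concave on [b, c], and differentiable at b. Then for every x ∈ [a, c], f(x) ≥ min(f(a), f(c)). -/
open Set

/-- Piecewise-concave function, differentiable at the junction, attains its minimum
over the whole interval at one of the outer endpoints. -/
theorem stmt_0 (a b c : ℝ) (hab : a < b) (hbc : b < c) (f : ℝ → ℝ)
    (hcont : ContinuousOn f (Icc a c))
    (hconc1 : ConcaveOn ℝ (Icc a b) f)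
    (hconc2 : ConcaveOn ℝ (Icc b c) f)
    (hdiff : DifferentiableAt ℝ f b) :
    ∀ x ∈ Icc a c, f x ≥ min (f a) (f c) := by
  have haI : a ∈ Icc a b := ⟨le_refl _, hab.le⟩
  have hbI : b ∈ Icc a b := ⟨hab.le, le_refl _⟩
  have hbI2 : b ∈ Icc b c := ⟨le_refl _, hbc.le⟩
  have hcI2 : c ∈ Icc b c := ⟨hbc.le, le_refl _⟩
  have key : min (f a) (f c) ≤ f b := by
    by_contra h
    push_neg at h
    have hba : f b < f a := lt_of_lt_of_le h (min_le_left _ _)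
    have hbc' : f b < f c := lt_of_lt_of_le h (min_le_right _ _)
    set d := deriv f b with hd
    have htend : Filter.Tendsto (slope f b) (nhdsWithin b {b}ᶜ) (nhds d) :=
      hasDerivAt_iff_tendsto_slope.mp hdiff.hasDerivAt
    have hg1 : ConvexOn ℝ (Icc a b) (-f) := hconc1.neg
    have hg2 : ConvexOn ℝ (Icc b c) (-f) := hconc2.neg
    -- left bound: d ≤ slope(a,b) < 0
    have hleft : d ≤ (f b - f a) / (b - a) := by
      have htend' : Filter.Tendsto (slope f b) (nhdsWithin b (Iio b)) (nhds d) :=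
        htend.mono_left (nhdsWithin_mono _ (fun x hx => ne_of_lt hx))
      refine le_of_tendsto htend' ?_
      filter_upwards [Ioo_mem_nhdsLT_of_mem (⟨hab, le_refl _⟩ : b ∈ Ioc a b)] with x hx
      have hmono := hg1.secant_mono hbI haI ⟨hx.1.le, hx.2.le⟩
        hab.ne hx.2.ne (hx.1.le)
      simp only [Pi.neg_apply] at hmono
      rw [show (-f a - -f b) = -(f a - f b) by ring, show (a - b) = -(b - a) by ring,
        show (-f x - -f b) = -(f x - f b) by ring, show (x - b) = -(b - x) by ring,
        neg_div_neg_eq, neg_div_neg_eq] at hmono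
      rw [slope_def_field]
      have e3 : (f x - f b) / (x - b) = -((f x - f b) / (b - x)) := by
        rw [show (x - b) = -(b - x) by ring, div_neg]
      have e4 : (f b - f a) / (b - a) = -((f a - f b) / (b - a)) := by
        rw [← neg_div]; ring_nf
      linarith
    -- right bound: slope(b,c) ≤ d, and slope(b,c) > 0
    have hright : (f c - f b) / (c - b) ≤ d := by
      have htend' : Filter.Tendsto (slope f b) (nhdsWithin b (Ioi b)) (nhds d) :=
        htend.mono_left (nhdsWithin_mono _ (fun x hx => ne_of_gt hx))
      refine ge_of_tendsto htend' ?_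
      filter_upwards [Ioo_mem_nhdsGT_of_mem (⟨le_refl _, hbc⟩ : b ∈ Ico b c)] with x hx
      have hmono := hg2.secant_mono hbI2 ⟨hx.1.le, hx.2.le⟩ hcI2
        hx.1.ne' hbc.ne' (hx.2.le)
      simp only [Pi.neg_apply] at hmono
      rw [show (-f x - -f b) = -(f x - f b) by ring, show (-f c - -f b) = -(f c - f b) by ring,
        neg_div, neg_div] at hmono
      rw [slope_def_field]
      linarith
    have hs1 : (f b - f a) / (b - a) < 0 :=
      div_neg_of_neg_of_pos (by linarith) (by linarith)
    have hs2 : (0:ℝ) < (f c - f b) / (c - b) :=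
      div_pos (by linarith) (by linarith)
    linarith
  intro x hx
  rcases le_total x b with hxb | hbx
  · have hseg : x ∈ segment ℝ a b := by
      rw [segment_eq_Icc hab.le]; exact ⟨hx.1, hxb⟩
    have := hconc1.ge_on_segment haI hbI hseg
    exact le_trans (le_min (min_le_left _ _) key) this
  · have hseg : x ∈ segment ℝ b c := by
      rw [segment_eq_Icc hbc.le]; exact ⟨hbx, hx.2⟩
    have := hconc2.ge_on_segment hbI2 hcI2 hseg
    exact le_trans (le_min key (min_le_right _ _)) this
end

section
/- Let a_lat > 0, a_brk ≥ 0, v ≥ 0, and y_c > 0. Suppose x, y : ℝ → ℝ are twice differentiable with x(0) = y(0) = 0, x'(0) = v, y'(0) = 0, and for all t ≥ 0: |y''(t)| ≤ a_lat, x''(t) ≥ −a_brk, and x'(t) ≥ 0. Set t_c = √(2 y_c / a_lat). Then every T ≥ 0 with y(T) ≥ y_c satisfies T ≥ t_c and x(T) ≥ v t_c − (a_brk t_c²)/2. -/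
/-!
Both coordinates are compared with constant-acceleration motion by integrating the acceleration
bounds twice: `y t ≤ a_lat t² / 2` forces the clearance time `T` to be at least `t_c`, and
`x t ≥ v t − a_brk t² / 2` holds at `t_c`; since `x` is nondecreasing, `x T ≥ x t_c`.
-/

open Set

theorem monotoneOn_Ici_of_deriv_nonneg {f : ℝ → ℝ} {a : ℝ} (hf : Differentiable ℝ f)
    (h : ∀ t, a ≤ t → 0 ≤ deriv f t) : MonotoneOn f (Ici a) :=
  monotoneOn_of_deriv_nonneg (convex_Ici a) hf.continuous.continuousOn hf.differentiableOn
    fun t ht => h t (interior_subset ht)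

theorem le_of_deriv_le_Ici {f g : ℝ → ℝ} {a t : ℝ} (hf : Differentiable ℝ f)
    (hg : Differentiable ℝ g) (ha : f a ≤ g a) (h : ∀ s, a ≤ s → deriv f s ≤ deriv g s)
    (ht : a ≤ t) : f t ≤ g t := by
  have hmono : MonotoneOn (g - f) (Ici a) :=
    monotoneOn_Ici_of_deriv_nonneg (hg.sub hf) fun s hs => by
      rw [deriv_sub (hg s) (hf s)]
      exact sub_nonneg.mpr (h s hs)
  have := hmono self_mem_Ici ht ht
  simp only [Pi.sub_apply] at this
  linarith

theorem le_of_deriv_deriv_le_Ici {f g : ℝ → ℝ} {a t : ℝ} (hf : Differentiable ℝ f)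
    (hf' : Differentiable ℝ (deriv f)) (hg : Differentiable ℝ g)
    (hg' : Differentiable ℝ (deriv g)) (ha : f a ≤ g a) (ha' : deriv f a ≤ deriv g a)
    (h : ∀ s, a ≤ s → deriv (deriv f) s ≤ deriv (deriv g) s) (ht : a ≤ t) : f t ≤ g t :=
  le_of_deriv_le_Ici hf hg ha (fun _ hs => le_of_deriv_le_Ici hf' hg' ha' h hs) ht

noncomputable def uniformlyAcceleratedPos (v a t : ℝ) : ℝ := v * t + a * t ^ 2 / 2

namespace uniformlyAcceleratedPos

variable (v a : ℝ)

theorem differentiable : Differentiable ℝ (uniformlyAcceleratedPos v a) := by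
  unfold uniformlyAcceleratedPos
  fun_prop

theorem deriv_eq : deriv (uniformlyAcceleratedPos v a) = fun t => v + a * t := by
  funext t
  have : HasDerivAt (uniformlyAcceleratedPos v a) (v * 1 + a * (2 * t ^ 1 * 1) / 2) t :=
    ((hasDerivAt_id t).const_mul v).add (((hasDerivAt_id t).pow 2).const_mul a |>.div_const 2)
  rw [this.deriv]
  ring

theorem differentiable_deriv : Differentiable ℝ (deriv (uniformlyAcceleratedPos v a)) := by
  rw [deriv_eq]
  fun_prop

theorem deriv_deriv (t : ℝ) : deriv (deriv (uniformlyAcceleratedPos v a)) t = a := by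
  rw [deriv_eq]
  simp

theorem apply_zero : uniformlyAcceleratedPos v a 0 = 0 := by
  simp [uniformlyAcceleratedPos]

theorem deriv_zero : deriv (uniformlyAcceleratedPos v a) 0 = v := by
  simp [deriv_eq]

end uniformlyAcceleratedPos

open uniformlyAcceleratedPos in
theorem stmt_3_general (a_lat a_brk v y_c : ℝ) (halat : 0 < a_lat) (x y : ℝ → ℝ)
    (hxd1 : Differentiable ℝ x) (hxd2 : Differentiable ℝ (deriv x))
    (hyd1 : Differentiable ℝ y) (hyd2 : Differentiable ℝ (deriv y))
    (hx0 : x 0 = 0) (hy0 : y 0 = 0) (hx'0 : deriv x 0 = v) (hy'0 : deriv y 0 = 0)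
    (hylat : ∀ t : ℝ, 0 ≤ t → |deriv (deriv y) t| ≤ a_lat)
    (hxbrk : ∀ t : ℝ, 0 ≤ t → deriv (deriv x) t ≥ -a_brk)
    (hfwd : ∀ t : ℝ, 0 ≤ t → deriv x t ≥ 0)
    (t_c : ℝ) (ht_c : t_c = Real.sqrt (2 * y_c / a_lat)) :
    ∀ T : ℝ, 0 ≤ T → y T ≥ y_c →
      T ≥ t_c ∧ x T ≥ v * t_c - a_brk * t_c ^ 2 / 2 := by
  intro T hT hyT
  have hy_le : y T ≤ uniformlyAcceleratedPos 0 a_lat T :=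
    le_of_deriv_deriv_le_Ici hyd1 hyd2 (differentiable 0 a_lat) (differentiable_deriv 0 a_lat)
      (by rw [hy0, apply_zero]) (by rw [hy'0, deriv_zero])
      (fun s hs => by rw [deriv_deriv]; exact (abs_le.mp (hylat s hs)).2) hT
  have htc_le : t_c ≤ T := by
    rw [ht_c, Real.sqrt_le_left hT, div_le_iff₀ halat]
    simp only [uniformlyAcceleratedPos] at hy_le
    linarith
  have htc_nonneg : 0 ≤ t_c := ht_c ▸ Real.sqrt_nonneg _
  have hx_tc : uniformlyAcceleratedPos v (-a_brk) t_c ≤ x t_c :=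
    le_of_deriv_deriv_le_Ici (differentiable v _) (differentiable_deriv v _) hxd1 hxd2
      (by rw [hx0, apply_zero]) (by rw [hx'0, deriv_zero])
      (fun s hs => by rw [deriv_deriv]; exact hxbrk s hs) htc_nonneg
  have hx_mono : x t_c ≤ x T :=
    monotoneOn_Ici_of_deriv_nonneg hxd1 hfwd htc_nonneg (htc_nonneg.trans htc_le) htc_le
  refine ⟨htc_le, ?_⟩
  simp only [uniformlyAcceleratedPos] at hx_tc
  linarith

/-- Particle-model lower bound on swerve manoeuvres: for any planar trajectory whose
lateral acceleration is bounded by `a_lat`, whose longitudinal deceleration is bounded by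
`a_brk`, and which always moves forward, the longitudinal distance covered upon reaching
the lateral clearance distance `y_c` is at least `v t_c − a_brk t_c²/2`
with `t_c = √(2 y_c / a_lat)`. -/
theorem stmt_3 (a_lat a_brk v y_c : ℝ) (halat : 0 < a_lat) (habrk : 0 ≤ a_brk)
    (hv : 0 ≤ v) (hyc : 0 < y_c) (x y : ℝ → ℝ)
    (hxd1 : Differentiable ℝ x) (hxd2 : Differentiable ℝ (deriv x))
    (hyd1 : Differentiable ℝ y) (hyd2 : Differentiable ℝ (deriv y))
    (hx0 : x 0 = 0) (hy0 : y 0 = 0) (hx'0 : deriv x 0 = v) (hy'0 : deriv y 0 = 0)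
    (hylat : ∀ t : ℝ, 0 ≤ t → |deriv (deriv y) t| ≤ a_lat)
    (hxbrk : ∀ t : ℝ, 0 ≤ t → deriv (deriv x) t ≥ -a_brk)
    (hfwd : ∀ t : ℝ, 0 ≤ t → deriv x t ≥ 0)
    (t_c : ℝ) (ht_c : t_c = Real.sqrt (2 * y_c / a_lat)) :
    ∀ T : ℝ, 0 ≤ T → y T ≥ y_c →
      T ≥ t_c ∧ x T ≥ v * t_c - a_brk * t_c ^ 2 / 2 :=
  stmt_3_general a_lat a_brk v y_c halat x y hxd1 hxd2 hyd1 hyd2 hx0 hy0 hx'0 hy'0 hylat hxbrk hfwd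
    t_c ht_c
end

section
/- Let d_f, d_r, b_l, b_r > 0 and 0 ≤ θ_max ≤ π/2. Define d' = d_f cos θ_max + b_r sin θ_max if θ_max ≤ arctan(b_r/d_f) and d' = √(d_f² + b_r²) otherwise; d̄ = d_r cos θ_max + b_l sin θ_max if θ_max ≤ arctan(b_l/d_r) and d̄ = √(d_r² + b_l²) otherwise; b' = d_r sin θ_max + b_r cos θ_max if θ_max ≤ arctan(d_r/b_r) and b' = √(d_r² + b_r²) otherwise. Then for every θ ∈ [0, θ_max] and every (p, q) ∈ [−d_r, d_f] × [−b_r, b_l], the rotated point (p cos θ − q sin θ, p sin θ + q cos θ) satisfies −d̄ ≤ p cos θ − q sin θ ≤ d' and p sin θ + q cos θ ≥ −b'. -/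
open Real Set

lemma key_bound (a b θ θ_max : ℝ) (ha : 0 < a) (hb : 0 < b)
    (h0 : 0 ≤ θ) (h1 : θ ≤ θ_max) (h2 : θ_max ≤ π/2) :
    a * Real.cos θ + b * Real.sin θ ≤
      if θ_max ≤ Real.arctan (b/a) then a * Real.cos θ_max + b * Real.sin θ_max
      else Real.sqrt (a^2 + b^2) := by
  have hpi : (0:ℝ) < π/2 := by positivity
  split_ifs with h
  · -- monotone case
    set m := (θ_max + θ)/2 with hm
    set n := (θ_max - θ)/2 with hn
    have hφ : Real.arctan (b/a) < π/2 := Real.arctan_lt_pi_div_two _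
    have hm0 : 0 ≤ m := by simp only [hm]; linarith
    have hmle : m ≤ Real.arctan (b/a) := by
      have : m ≤ θ_max := by simp only [hm]; linarith
      linarith
    have hmlt : m < π/2 := lt_of_le_of_lt hmle hφ
    have htan : Real.tan m ≤ b / a := by
      have := Real.strictMonoOn_tan.monotoneOn
        (a := m) (b := Real.arctan (b/a))
        ⟨by linarith, hmlt⟩ (Real.arctan_mem_Ioo _) hmle
      rwa [Real.tan_arctan] at this
    have hcosm : 0 < Real.cos m := Real.cos_pos_of_mem_Ioo ⟨by linarith, hmlt⟩
    have key : a * Real.sin m ≤ b * Real.cos m := by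
      rw [Real.tan_eq_sin_div_cos, div_le_div_iff₀ hcosm ha] at htan
      linarith
    have hsinn : 0 ≤ Real.sin n := by
      apply Real.sin_nonneg_of_nonneg_of_le_pi
      · simp only [hn]; linarith
      · simp only [hn]; nlinarith [Real.pi_pos]
    have hc : Real.cos θ - Real.cos θ_max = 2 * Real.sin m * Real.sin n := by
      rw [Real.cos_sub_cos]
      have e : (θ - θ_max)/2 = -n := by simp only [hn]; ring
      rw [e, Real.sin_neg]; simp only [hm]; ring
    have hs : Real.sin θ_max - Real.sin θ = 2 * Real.sin n * Real.cos m := by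
      rw [Real.sin_sub_sin]
    nlinarith [mul_le_mul_of_nonneg_left key hsinn]
  · have hcos : 0 ≤ Real.cos θ := Real.cos_nonneg_of_mem_Icc ⟨by linarith, by linarith⟩
    have hsin : 0 ≤ Real.sin θ := Real.sin_nonneg_of_nonneg_of_le_pi h0 (by nlinarith [Real.pi_pos])
    rw [Real.le_sqrt (by positivity)]
    · nlinarith [Real.sin_sq_add_cos_sq θ, sq_nonneg (a * Real.sin θ - b * Real.cos θ)]
    · positivity

/-- The rotated vehicle chassis `[−d_r, d_f] × [−b_r, b_l]` remains inside the
axis-aligned bounding rectangle with forward extent `d'`, rearward extent `d̄`, and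
rightward extent `b'` for any yaw `θ ∈ [0, θ_max]`. -/
theorem stmt_10 (d_f d_r b_l b_r θ_max : ℝ)
    (hdf : 0 < d_f) (hdr : 0 < d_r) (hbl : 0 < b_l) (hbr : 0 < b_r)
    (hθ0 : 0 ≤ θ_max) (hθm : θ_max ≤ π / 2)
    (d' dbar b' : ℝ)
    (hd' : d' = if θ_max ≤ Real.arctan (b_r / d_f)
        then d_f * Real.cos θ_max + b_r * Real.sin θ_max
        else Real.sqrt (d_f ^ 2 + b_r ^ 2))
    (hdbar : dbar = if θ_max ≤ Real.arctan (b_l / d_r)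
        then d_r * Real.cos θ_max + b_l * Real.sin θ_max
        else Real.sqrt (d_r ^ 2 + b_l ^ 2))
    (hb' : b' = if θ_max ≤ Real.arctan (d_r / b_r)
        then d_r * Real.sin θ_max + b_r * Real.cos θ_max
        else Real.sqrt (d_r ^ 2 + b_r ^ 2)) :
    ∀ θ ∈ Icc 0 θ_max, ∀ p ∈ Icc (-d_r) d_f, ∀ q ∈ Icc (-b_r) b_l,
      -dbar ≤ p * Real.cos θ - q * Real.sin θ ∧
      p * Real.cos θ - q * Real.sin θ ≤ d' ∧
      p * Real.sin θ + q * Real.cos θ ≥ -b' := by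

  rintro θ ⟨hθl, hθr⟩ p ⟨hpl, hpr⟩ q ⟨hql, hqr⟩
  have hcos : 0 ≤ Real.cos θ :=
    Real.cos_nonneg_of_mem_Icc ⟨by linarith [Real.pi_pos], by linarith⟩
  have hsin : 0 ≤ Real.sin θ :=
    Real.sin_nonneg_of_nonneg_of_le_pi hθl (by nlinarith [Real.pi_pos])
  have k1 := key_bound d_f b_r θ θ_max hdf hbr hθl hθr hθm
  have k2 := key_bound d_r b_l θ θ_max hdr hbl hθl hθr hθm
  have k3 := key_bound b_r d_r θ θ_max hbr hdr hθl hθr hθm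
  refine ⟨?_, ?_, ?_⟩
  · rw [hdbar]
    have h1 : -(d_r * Real.cos θ + b_l * Real.sin θ) ≤ p * Real.cos θ - q * Real.sin θ := by
      nlinarith
    split_ifs at k2 ⊢ with h <;> linarith
  · rw [hd']
    have h1 : p * Real.cos θ - q * Real.sin θ ≤ d_f * Real.cos θ + b_r * Real.sin θ := by
      nlinarith
    split_ifs at k1 ⊢ with h <;> linarith
  · rw [hb']
    have h1 : -(b_r * Real.cos θ + d_r * Real.sin θ) ≤ p * Real.sin θ + q * Real.cos θ := by
      nlinarith
    split_ifs at k3 ⊢ with h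
    · linarith
    · have : Real.sqrt (b_r^2 + d_r^2) = Real.sqrt (d_r^2 + b_r^2) := by ring_nf
      linarith
end

section
/- Let ρ > 0, v_r ≥ 0, v_f ≥ 0, a_acc ≥ 0, and 0 < a_min ≤ a_max, and set v_{r,ρ} = v_r + a_acc ρ. Define the rear trajectory x_r(t) = v_r t + (a_acc t²)/2 for 0 ≤ t ≤ ρ, and x_r(t) = x_r(ρ) + v_{r,ρ} s − (a_min s²)/2 with s = min(t − ρ, v_{r,ρ}/a_min) for t ≥ ρ; and the front trajectory x_f(t) = D + v_f u − (a_max u²)/2 with u = min(t, v_f/a_max) for t ≥ 0. If D ≥ [v_r ρ + (a_acc ρ²)/2 + v_{r,ρ}²/(2 a_min) − v_f²/(2 a_max)]₊, then x_f(t) ≥ x_r(t) for all t ≥ 0. -/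
set_option maxHeartbeats 1000000


/-- RSS longitudinal safe distance guarantee (`d_{b,b}`): a rear vehicle accelerating at
`a_acc` during the reaction time `ρ` and then braking at `a_min` until stopping never
collides with a front vehicle braking at `a_max` until stopping, provided the initial gap
`D` is at least the RSS following distance. -/
theorem stmt_12 (ρ v_r v_f a_acc a_min a_max D : ℝ)
    (hρ : 0 < ρ) (hvr : 0 ≤ v_r) (hvf : 0 ≤ v_f) (hacc : 0 ≤ a_acc)
    (hmin : 0 < a_min) (hminmax : a_min ≤ a_max)
    (v_rρ : ℝ) (hvrρ : v_rρ = v_r + a_acc * ρ)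
    (x_r x_f : ℝ → ℝ)
    (hxr1 : ∀ t, 0 ≤ t → t ≤ ρ → x_r t = v_r * t + a_acc * t ^ 2 / 2)
    (hxr2 : ∀ t, ρ ≤ t → x_r t = (v_r * ρ + a_acc * ρ ^ 2 / 2) +
        v_rρ * min (t - ρ) (v_rρ / a_min) - a_min * (min (t - ρ) (v_rρ / a_min)) ^ 2 / 2)
    (hxf : ∀ t, 0 ≤ t → x_f t = D +
        v_f * min t (v_f / a_max) - a_max * (min t (v_f / a_max)) ^ 2 / 2)
    (hD : D ≥ max (v_r * ρ + a_acc * ρ ^ 2 / 2 + v_rρ ^ 2 / (2 * a_min)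
        - v_f ^ 2 / (2 * a_max)) 0) :
    ∀ t, 0 ≤ t → x_f t ≥ x_r t := by
  intro t ht
  have hamax : 0 < a_max := lt_of_lt_of_le hmin hminmax
  have hne : a_min ≠ 0 := ne_of_gt hmin
  have hne' : a_max ≠ 0 := ne_of_gt hamax
  have hvrρ0 : 0 ≤ v_rρ := by nlinarith [mul_nonneg hacc hρ.le]
  have hD0 : (0:ℝ) ≤ D := le_trans (le_max_right _ _) hD
  have hDA : v_r * ρ + a_acc * ρ ^ 2 / 2 + v_rρ ^ 2 / (2 * a_min)
      - v_f ^ 2 / (2 * a_max) ≤ D := le_trans (le_max_left _ _) hD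
  rw [hxf t ht, ge_iff_le]
  rcases le_total t ρ with h1 | h1
  · -- reaction phase of the rear vehicle
    rw [hxr1 t ht h1]
    have hmono : v_r * t + a_acc * t ^ 2 / 2 ≤ v_r * ρ + a_acc * ρ ^ 2 / 2 := by
      nlinarith [mul_nonneg hvr (sub_nonneg.2 h1),
        mul_nonneg hacc (mul_nonneg (sub_nonneg.2 h1) (by linarith : (0:ℝ) ≤ ρ + t))]
    rcases le_total t (v_f / a_max) with h2 | h2
    · -- front vehicle still braking
      rw [min_eq_left h2]
      have hwf0 : a_max * t ≤ v_f := by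
        rw [mul_comm]; exact (le_div_iff₀ hamax).mp h2
      rcases le_total (v_f - a_max * t) (v_r + a_acc * t) with h3 | h3
      · -- front is currently slower: compare residual braking distances
        have e1 : v_f * t - a_max * t ^ 2 / 2
            = v_f ^ 2 / (2 * a_max) - (v_f - a_max * t) ^ 2 / (2 * a_max) := by
          field_simp; ring
        have key : (v_f - a_max * t) ^ 2 / (2 * a_max) ≤ v_rρ ^ 2 / (2 * a_min) := by
          rw [div_le_div_iff₀ (by positivity) (by positivity)]
          have h5 : 0 ≤ v_f - a_max * t := by linarith
          have h6 : v_f - a_max * t ≤ v_rρ := by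
            nlinarith [mul_nonneg hacc (sub_nonneg.2 h1)]
          nlinarith [pow_le_pow_left₀ h5 h6 2, sq_nonneg (v_f - a_max * t)]
        linarith [e1, key, hDA, hmono]
      · -- front is faster: the gap has not shrunk below `D`
        nlinarith [mul_nonneg ht (sub_nonneg.2 h3),
          mul_nonneg hamax.le (sq_nonneg t), mul_nonneg hacc (sq_nonneg t)]
    · -- front vehicle already stopped
      rw [min_eq_right h2]
      have e1 : v_f * (v_f / a_max) - a_max * (v_f / a_max) ^ 2 / 2
          = v_f ^ 2 / (2 * a_max) := by field_simp; ring
      have hBnn : (0:ℝ) ≤ v_rρ ^ 2 / (2 * a_min) := by positivity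
      linarith [e1, hBnn, hDA, hmono]
  · -- braking phase of the rear vehicle
    rw [hxr2 t h1]
    have hρt : 0 ≤ t - ρ := sub_nonneg.2 h1
    rcases le_total (v_f / a_max) t with h2 | h2
    · -- front vehicle already stopped: compare final positions
      rw [min_eq_right h2]
      have e1 : v_f * (v_f / a_max) - a_max * (v_f / a_max) ^ 2 / 2
          = v_f ^ 2 / (2 * a_max) := by field_simp; ring
      have hub : ∀ y : ℝ, v_rρ * y - a_min * y ^ 2 / 2 ≤ v_rρ ^ 2 / (2 * a_min) := by
        intro y
        rw [le_div_iff₀ (by positivity : (0:ℝ) < 2 * a_min)]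
        nlinarith [sq_nonneg (v_rρ - a_min * y)]
      linarith [e1, hub (min (t - ρ) (v_rρ / a_min)), hDA]
    · -- front vehicle still braking
      rw [min_eq_left h2]
      have hwf0 : a_max * t ≤ v_f := by
        rw [mul_comm]; exact (le_div_iff₀ hamax).mp h2
      rcases le_total (v_rρ / a_min) (t - ρ) with h3 | h3
      · -- rear vehicle already stopped
        rw [min_eq_right h3]
        have hS0 : 0 ≤ v_rρ / a_min := by positivity
        have hS1 : a_min * (v_rρ / a_min) = v_rρ := by field_simp
        have hS2 : a_min * (v_rρ / a_min) * ρ = v_rρ * ρ := by rw [hS1]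
        have hS3 : a_min * (v_rρ / a_min) * (v_rρ / a_min)
            = v_rρ * (v_rρ / a_min) := by rw [hS1]
        have hvv : v_rρ * ρ = v_r * ρ + a_acc * ρ ^ 2 := by rw [hvrρ]; ring
        have e2 : v_rρ * (v_rρ / a_min) - a_min * (v_rρ / a_min) ^ 2 / 2
            = v_rρ * (v_rρ / a_min) / 2 := by field_simp; ring
        nlinarith [mul_nonneg ht (sub_nonneg.2 hwf0),
          mul_nonneg (sub_nonneg.2 hminmax) (sq_nonneg t),
          mul_nonneg (mul_nonneg hmin.le (by linarith : (0:ℝ) ≤ t - ρ - v_rρ / a_min))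
            (by linarith : (0:ℝ) ≤ t + ρ + v_rρ / a_min)]
      · -- both vehicles still moving
        rw [min_eq_left h3]
        have hwr0 : (t - ρ) * a_min ≤ v_rρ := (le_div_iff₀ hmin).mp h3
        rcases le_total (v_f - a_max * t) (v_rρ - a_min * (t - ρ)) with h4 | h4
        · -- front currently slower: compare residual braking distances
          have e1 : v_f * t - a_max * t ^ 2 / 2
              = v_f ^ 2 / (2 * a_max) - (v_f - a_max * t) ^ 2 / (2 * a_max) := by
            field_simp; ring
          have e2 : v_rρ * (t - ρ) - a_min * (t - ρ) ^ 2 / 2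
              = v_rρ ^ 2 / (2 * a_min) - (v_rρ - a_min * (t - ρ)) ^ 2 / (2 * a_min) := by
            field_simp; ring
          have key : (v_f - a_max * t) ^ 2 / (2 * a_max)
              ≤ (v_rρ - a_min * (t - ρ)) ^ 2 / (2 * a_min) := by
            rw [div_le_div_iff₀ (by positivity) (by positivity)]
            have h5 : 0 ≤ v_f - a_max * t := by linarith
            nlinarith [pow_le_pow_left₀ h5 h4 2, sq_nonneg (v_f - a_max * t)]
          linarith [e1, e2, key, hDA]
        · -- front currently faster: the gap has not shrunk below `D`
          nlinarith [mul_nonneg ht (sub_nonneg.2 h4),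
            mul_nonneg (sub_nonneg.2 hminmax) (sq_nonneg t),
            mul_nonneg hacc (sq_nonneg ρ), mul_nonneg hmin.le (sq_nonneg ρ)]
end

section
/- Let ρ ≥ 0, a_max > 0, a_min > 0, and μ ≥ 0. Define y(t) = (a_max t²)/2 for 0 ≤ t ≤ ρ, and y(t) = y(ρ) + a_max ρ s − (a_min s²)/2 with s = min(t − ρ, a_max ρ/a_min) for t ≥ ρ. Consider two agents with lateral positions y₁(t) = y(t) and y₂(t) = D − y(t). If D ≥ μ + a_max ρ² + (a_max ρ)²/a_min, then y₂(t) − y₁(t) ≥ μ for all t ≥ 0. -/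
/-- RSS lateral safe distance guarantee with zero initial lateral velocities: two agents
separated laterally by `D` that accelerate toward each other at `a_max` for the reaction
time `ρ` and then decelerate at `a_min` until their lateral velocity is zero maintain a
lateral buffer of at least `μ` at all times. -/
theorem stmt_13 (ρ a_max a_min μ : ℝ)
    (hρ : 0 ≤ ρ) (hmax : 0 < a_max) (hmin : 0 < a_min) (hμ : 0 ≤ μ)
    (y : ℝ → ℝ)
    (hy1 : ∀ t, 0 ≤ t → t ≤ ρ → y t = a_max * t ^ 2 / 2)
    (hy2 : ∀ t, ρ ≤ t → y t = a_max * ρ ^ 2 / 2 +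
        a_max * ρ * min (t - ρ) (a_max * ρ / a_min)
        - a_min * (min (t - ρ) (a_max * ρ / a_min)) ^ 2 / 2)
    (D : ℝ) (y₁ y₂ : ℝ → ℝ)
    (hy₁ : ∀ t, y₁ t = y t) (hy₂ : ∀ t, y₂ t = D - y t)
    (hD : D ≥ μ + a_max * ρ ^ 2 + (a_max * ρ) ^ 2 / a_min) :
    ∀ t, 0 ≤ t → y₂ t - y₁ t ≥ μ := by
  intro t ht
  rw [hy₁, hy₂]
  have key : y t ≤ a_max * ρ ^ 2 / 2 + (a_max * ρ) ^ 2 / (2 * a_min) := by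
    rcases le_or_gt t ρ with h | h
    · rw [hy1 t ht h]
      have hsq : t ^ 2 ≤ ρ ^ 2 := pow_le_pow_left₀ ht h 2
      have h1 : a_max * t ^ 2 / 2 ≤ a_max * ρ ^ 2 / 2 := by nlinarith
      have h2 : 0 ≤ (a_max * ρ) ^ 2 / (2 * a_min) := by positivity
      linarith
    · rw [hy2 t h.le]
      set s := min (t - ρ) (a_max * ρ / a_min) with hs
      have h1 : (a_min * s - a_max * ρ) ^ 2 / (2 * a_min) ≥ 0 := by positivity
      have hid : (a_max * ρ) ^ 2 / (2 * a_min) - (a_max * ρ * s - a_min * s ^ 2 / 2)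
          = (a_min * s - a_max * ρ) ^ 2 / (2 * a_min) := by
        field_simp
        ring
      linarith
  have hdiv : (a_max * ρ) ^ 2 / a_min = 2 * ((a_max * ρ) ^ 2 / (2 * a_min)) := by
    field_simp
  linarith [hD, hdiv ▸ hD]
end

section
/- Let ρ > 0, t_c > 0, v_r ≥ 0, a_acc ≥ 0, a_max > 0, v_f' ≥ 0 with v_f' ≤ v_r, x_c ∈ ℝ, D' ≥ 0, and g₀ ∈ ℝ, and set v_{r,ρ} = v_r + a_acc ρ. Define the rear trajectory x_r(t) = v_r t + (a_acc t²)/2 for 0 ≤ t ≤ ρ, and x_r(t) = x_r(ρ) + X(t − ρ) for ρ ≤ t ≤ ρ + t_c, where X : [0, t_c] → ℝ is differentiable with X(0) = 0, X(t_c) = x_c, and X'(s) ≥ v_f' for all s ∈ [0, t_c]. Define the front lower-bound trajectory x̂_f(t) = g₀ + v_f' t − (a_max t²)/2. If g₀ ≥ [v_r ρ + (a_acc ρ²)/2 + x_c − (v_f'(ρ + t_c) − a_max(ρ + t_c)²/2)]₊ + D', then x̂_f(t) − x_r(t) ≥ D' for all t ∈ [0, ρ + t_c]. -/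
open Set

/-- Swerving for a braking lead vehicle (paper's Theorem 2): if the initial gap `g₀` is
at least `d_{s,b}`, the gap between the front vehicle's braking lower-bound trajectory
and the rear vehicle's accelerate-then-swerve trajectory never drops below the body
buffer `D'` until the clearance time `ρ + t_c`. -/
theorem stmt_15 (ρ t_c v_r a_acc a_max v_f' x_c D' g₀ : ℝ)
    (hρ : 0 < ρ) (htc : 0 < t_c) (hvr : 0 ≤ v_r) (hacc : 0 ≤ a_acc)
    (hmax : 0 < a_max) (hvf0 : 0 ≤ v_f') (hvfr : v_f' ≤ v_r) (hD' : 0 ≤ D')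
    (v_rρ : ℝ) (hvrρ : v_rρ = v_r + a_acc * ρ)
    (X X' : ℝ → ℝ)
    (hX : ∀ s ∈ Icc 0 t_c, HasDerivWithinAt X (X' s) (Icc 0 t_c) s)
    (hX0 : X 0 = 0) (hXtc : X t_c = x_c)
    (hX' : ∀ s ∈ Icc 0 t_c, v_f' ≤ X' s)
    (x_r xf_lb : ℝ → ℝ)
    (hxr1 : ∀ t, 0 ≤ t → t ≤ ρ → x_r t = v_r * t + a_acc * t ^ 2 / 2)
    (hxr2 : ∀ t, ρ ≤ t → t ≤ ρ + t_c →
        x_r t = (v_r * ρ + a_acc * ρ ^ 2 / 2) + X (t - ρ))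
    (hxf : ∀ t, xf_lb t = g₀ + v_f' * t - a_max * t ^ 2 / 2)
    (hg₀ : g₀ ≥ max (v_r * ρ + a_acc * ρ ^ 2 / 2 + x_c -
        (v_f' * (ρ + t_c) - a_max * (ρ + t_c) ^ 2 / 2)) 0 + D') :
    ∀ t ∈ Icc 0 (ρ + t_c), xf_lb t - x_r t ≥ D' := by
  -- key monotonicity: X b - X a ≥ v_f' (b - a) for 0 ≤ a ≤ b ≤ t_c
  have hgmono : MonotoneOn (fun s => X s - v_f' * s) (Icc 0 t_c) := by
    apply monotoneOn_of_hasDerivWithinAt_nonneg (convex_Icc 0 t_c)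
      (f' := fun s => X' s - v_f')
    · exact fun s hs => ((hX s hs).continuousWithinAt).sub
        ((continuous_const.mul continuous_id).continuousWithinAt)
    · intro s hs
      rw [interior_Icc] at hs
      have := (hX s (Ioo_subset_Icc_self hs)).sub
        ((hasDerivWithinAt_id s _).const_mul v_f')
      have h2 : HasDerivWithinAt (fun s => X s - v_f' * s) (X' s - v_f' * 1)
          (Icc 0 t_c) s := this
      rw [interior_Icc]
      exact (h2.mono Ioo_subset_Icc_self).congr_deriv (by ring)
    · intro s hs
      rw [interior_Icc] at hs
      have := hX' s (Ioo_subset_Icc_self hs)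
      linarith
  have hkey : ∀ a b, 0 ≤ a → a ≤ b → b ≤ t_c → v_f' * (b - a) ≤ X b - X a := by
    intro a b ha hab hb
    have h := hgmono ⟨ha, hab.trans hb⟩ ⟨ha.trans hab, hb⟩ hab
    simp only at h
    linarith
  have hxctc : v_f' * t_c ≤ x_c := by
    have := hkey 0 t_c le_rfl htc.le le_rfl
    rw [hX0, hXtc] at this; linarith
  have hmaxge : g₀ ≥ (v_r * ρ + a_acc * ρ ^ 2 / 2 + x_c -
      (v_f' * (ρ + t_c) - a_max * (ρ + t_c) ^ 2 / 2)) + D' := by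
    have := le_max_left (v_r * ρ + a_acc * ρ ^ 2 / 2 + x_c -
      (v_f' * (ρ + t_c) - a_max * (ρ + t_c) ^ 2 / 2)) (0:ℝ)
    linarith
  intro t ht
  obtain ⟨ht0, ht1⟩ := ht
  rw [hxf t]
  rcases le_or_gt t ρ with hcase | hcase
  · rw [hxr1 t ht0 hcase]
    -- need: g₀ + v_f' t - a_max t²/2 - (v_r t + a_acc t²/2) ≥ D'
    have h1 : a_max * t ^ 2 / 2 ≤ a_max * (ρ + t_c) ^ 2 / 2 := by
      have : t ^ 2 ≤ (ρ + t_c) ^ 2 := by nlinarith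
      nlinarith
    have h2 : a_acc * t ^ 2 / 2 ≤ a_acc * ρ ^ 2 / 2 := by
      have : 0 ≤ a_acc * ((ρ - t) * (ρ + t)) :=
        mul_nonneg hacc (mul_nonneg (by linarith) (by linarith))
      nlinarith [this]
    have h3 : 0 ≤ (ρ - t) * (v_r - v_f') := mul_nonneg (by linarith) (by linarith)
    linarith [hmaxge, hxctc, h1, h2, h3]
  · have hρt : ρ ≤ t := hcase.le
    rw [hxr2 t hρt ht1]
    set s := t - ρ with hs
    have hs0 : 0 ≤ s := by rw [hs]; linarith
    have hstc : s ≤ t_c := by rw [hs]; linarith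
    have hXs : v_f' * (t_c - s) ≤ x_c - X s := by
      have := hkey s t_c hs0 hstc le_rfl
      rw [hXtc] at this; linarith
    have h1 : a_max * t ^ 2 / 2 ≤ a_max * (ρ + t_c) ^ 2 / 2 := by
      have : t ^ 2 ≤ (ρ + t_c) ^ 2 := by nlinarith
      nlinarith
    have h4 : v_f' * t = v_f' * ρ + v_f' * s := by rw [hs]; ring
    linarith [hmaxge, hXs, h1, h4]
end

section
/- Let ρ ≥ 0, t_c ≥ ρ, v_r ≥ 0, a_acc ≥ 0, a_min > 0, D' ≥ 0, and g₀ ∈ ℝ, and set v_{r,ρ} = v_r + a_acc ρ. Define the rear trajectory x_r(t) = v_r t + (a_acc t²)/2 for 0 ≤ t ≤ ρ, and x_r(t) = x_r(ρ) + v_{r,ρ} s − (a_min s²)/2 with s = min(t − ρ, v_{r,ρ}/a_min) for t ≥ ρ. Let v_f' ≥ 0 satisfy v_f' ≤ v_r and v_f' ≤ max(v_{r,ρ} − a_min(t_c − ρ), 0), and define the front lower-bound trajectory x̂_f(t) = g₀ + v_f' t. If g₀ ≥ [x_r(t_c) − v_f' t_c]₊ + D', then x̂_f(t) − x_r(t)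 ≥ D' for all t ∈ [0, t_c]. -/
set_option maxHeartbeats 1000000


open Set

/-- Braking for a swerving lead vehicle (paper's Theorem 3): if the initial gap `g₀` is
at least `d_{b,s}`, the gap between the front vehicle's constant-speed lower-bound
trajectory and the rear vehicle's accelerate-then-brake trajectory never drops below the
body buffer `D'` until the front vehicle's clearance time `t_c`. -/
theorem stmt_16 (ρ t_c v_r a_acc a_min v_f' D' g₀ : ℝ)
    (hρ : 0 ≤ ρ) (htc : ρ ≤ t_c) (hvr : 0 ≤ v_r) (hacc : 0 ≤ a_acc)
    (hmin : 0 < a_min) (hD' : 0 ≤ D')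
    (v_rρ : ℝ) (hvrρ : v_rρ = v_r + a_acc * ρ)
    (x_r xf_lb : ℝ → ℝ)
    (hxr1 : ∀ t, 0 ≤ t → t ≤ ρ → x_r t = v_r * t + a_acc * t ^ 2 / 2)
    (hxr2 : ∀ t, ρ ≤ t → x_r t = (v_r * ρ + a_acc * ρ ^ 2 / 2) +
        v_rρ * min (t - ρ) (v_rρ / a_min) - a_min * (min (t - ρ) (v_rρ / a_min)) ^ 2 / 2)
    (hvf0 : 0 ≤ v_f') (hvfr : v_f' ≤ v_r)
    (hvfmin : v_f' ≤ max (v_rρ - a_min * (t_c - ρ)) 0)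
    (hxf : ∀ t, xf_lb t = g₀ + v_f' * t)
    (hg₀ : g₀ ≥ max (x_r t_c - v_f' * t_c) 0 + D') :
    ∀ t ∈ Icc 0 t_c, xf_lb t - x_r t ≥ D' := by
  intro t ht
  obtain ⟨ht0, httc⟩ := ht
  have hvrρ0 : 0 ≤ v_rρ := by nlinarith
  have hxtc := hxr2 t_c htc
  set stc := min (t_c - ρ) (v_rρ / a_min) with hstc
  have hstc0 : 0 ≤ stc := le_min (by linarith) (by positivity)
  have hstc1 : a_min * stc ≤ v_rρ := by
    have h := min_le_right (t_c - ρ) (v_rρ / a_min)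
    have : stc ≤ v_rρ / a_min := h
    calc a_min * stc ≤ a_min * (v_rρ / a_min) := by nlinarith
      _ = v_rρ := by field_simp
  have hρval : x_r ρ = v_r * ρ + a_acc * ρ ^ 2 / 2 := by
    rw [hxr2 ρ le_rfl, sub_self, min_eq_left (by positivity)]; ring
  have key : x_r t - v_f' * t ≤ max (x_r t_c - v_f' * t_c) 0 := by
    rcases le_or_gt (v_rρ - a_min * (t_c - ρ)) 0 with hA | hA
    · -- v_f' = 0
      have hvf : v_f' = 0 := le_antisymm (by simpa [max_eq_right hA] using hvfmin) hvf0
      have hmono : x_r t ≤ x_r t_c := by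
        rcases le_total t ρ with htρ | htρ
        · have h2 : x_r ρ ≤ x_r t_c := by
            rw [hρval, hxtc]
            nlinarith [mul_le_mul_of_nonneg_right hstc1 hstc0]
          have h1 : x_r t ≤ x_r ρ := by
            rw [hxr1 t ht0 htρ, hρval]
            nlinarith [mul_le_mul_of_nonneg_left htρ hvr,
              mul_nonneg hacc (by nlinarith : (0:ℝ) ≤ ρ ^ 2 - t ^ 2)]
          linarith
        · set st := min (t - ρ) (v_rρ / a_min) with hst
          have hst0 : 0 ≤ st := le_min (by linarith) (by positivity)
          have hstle : st ≤ stc := min_le_min (by linarith) le_rfl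
          rw [hxr2 t htρ, hxtc]
          nlinarith [mul_nonneg (sub_nonneg.2 hstle) (sub_nonneg.2 hstc1),
            mul_nonneg hmin.le (sq_nonneg (stc - st))]
      subst hvf
      have := le_max_left (x_r t_c - 0 * t_c) (0 : ℝ)
      linarith
    · have hvf' : v_f' ≤ v_rρ - a_min * (t_c - ρ) := by
        rwa [max_eq_left hA.le] at hvfmin
      have htcρ : t_c - ρ ≤ v_rρ / a_min := by
        rw [le_div_iff₀ hmin]; nlinarith
      have hstceq : stc = t_c - ρ := min_eq_left htcρ
      have hmain : x_r t - v_f' * t ≤ x_r t_c - v_f' * t_c := by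
        rcases le_total t ρ with htρ | htρ
        · have h2 : x_r ρ - v_f' * ρ ≤ x_r t_c - v_f' * t_c := by
            rw [hρval, hxtc, hstceq]
            nlinarith [mul_nonneg (by linarith : (0:ℝ) ≤ t_c - ρ)
              (by linarith : (0:ℝ) ≤ v_rρ - v_f' - a_min * (t_c - ρ))]
          have h1 : x_r t - v_f' * t ≤ x_r ρ - v_f' * ρ := by
            rw [hxr1 t ht0 htρ, hρval]
            nlinarith [mul_nonneg (sub_nonneg.2 hvfr) (by linarith : (0:ℝ) ≤ ρ - t),
              mul_nonneg hacc (by nlinarith : (0:ℝ) ≤ ρ ^ 2 - t ^ 2)]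
          linarith
        · have hmineq : min (t - ρ) (v_rρ / a_min) = t - ρ :=
            min_eq_left (le_trans (by linarith) htcρ)
          rw [hxr2 t htρ, hxtc, hmineq, hstceq]
          nlinarith [mul_nonneg (by linarith : (0:ℝ) ≤ t_c - t)
              (by linarith : (0:ℝ) ≤ v_rρ - v_f' - a_min * (t_c - ρ)),
            mul_nonneg hmin.le (sq_nonneg (t_c - t))]
      exact hmain.trans (le_max_left _ _)
  rw [hxf]
  linarith
end

section
/- Let ρ ≥ 0, t₁ ≥ 0, and t₂ satisfy ρ ≤ t₂ ≤ ρ + t₁; let v_r ≥ 0, a_acc ≥ 0, 0 < a_min ≤ a_max, 0 ≤ v_f' ≤ v_r, D' ≥ 0, and g₀ ∈ ℝ, and set v_{r,ρ} = v_r + a_acc ρ. Define the rear upper-bound trajectory x̂_r(t) = v_r t + (a_acc t²)/2 for 0 ≤ t ≤ ρ; x̂_r(t) = x̂_r(ρ) + v_{r,ρ}(t − ρ) for ρ ≤ t ≤ ρ + t₁; and x̂_r(t) = x̂_r(ρ + t₁) + v_{r,ρ} s − (a_min s²)/2 with s = min(t − ρ − t₁, v_{r,ρ}/a_min) for t ≥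 ρ + t₁. Define the front lower-bound trajectory x̂_f(t) = g₀ + v_f' t for 0 ≤ t ≤ t₂, and x̂_f(t) = g₀ + v_f' t₂ + v_f' u − (a_max u²)/2 with u = min(t − t₂, v_f'/a_max) for t ≥ t₂. If g₀ ≥ ((v_r + v_{r,ρ})ρ)/2 + v_{r,ρ} t₁ + v_{r,ρ}²/(2 a_min) − (v_f' t₂ + v_f'²/(2 a_max)) + D', then x̂_f(t) − x̂_r(t) ≥ D' for all t ≥ 0. -/
set_option maxHeartbeats 1000000


/-- Swerving for a swerving lead vehicle (paper's Theorem 4): if the initial gap `g₀` is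
at least `d_{s,s}`, the gap between the front vehicle's lower-bound trajectory
(constant speed `v_f'` until `t₂`, then hard braking at `a_max`) and the rear vehicle's
upper-bound trajectory (acceleration during `ρ`, constant speed `v_{r,ρ}` during its
swerve of duration `t₁`, then comfortable braking at `a_min`) never drops below the body
buffer `D'`. -/
theorem stmt_17 (ρ t₁ t₂ v_r a_acc a_min a_max v_f' D' g₀ : ℝ)
    (hρ : 0 ≤ ρ) (ht₁ : 0 ≤ t₁) (ht₂l : ρ ≤ t₂) (ht₂u : t₂ ≤ ρ + t₁)
    (hvr : 0 ≤ v_r) (hacc : 0 ≤ a_acc) (hmin : 0 < a_min) (hminmax : a_min ≤ a_max)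
    (hvf0 : 0 ≤ v_f') (hvfr : v_f' ≤ v_r) (hD' : 0 ≤ D')
    (v_rρ : ℝ) (hvrρ : v_rρ = v_r + a_acc * ρ)
    (xr_ub xf_lb : ℝ → ℝ)
    (hxr1 : ∀ t, 0 ≤ t → t ≤ ρ → xr_ub t = v_r * t + a_acc * t ^ 2 / 2)
    (hxr2 : ∀ t, ρ ≤ t → t ≤ ρ + t₁ →
        xr_ub t = (v_r * ρ + a_acc * ρ ^ 2 / 2) + v_rρ * (t - ρ))
    (hxr3 : ∀ t, ρ + t₁ ≤ t →
        xr_ub t = (v_r * ρ + a_acc * ρ ^ 2 / 2) + v_rρ * t₁ +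
          v_rρ * min (t - ρ - t₁) (v_rρ / a_min)
          - a_min * (min (t - ρ - t₁) (v_rρ / a_min)) ^ 2 / 2)
    (hxf1 : ∀ t, 0 ≤ t → t ≤ t₂ → xf_lb t = g₀ + v_f' * t)
    (hxf2 : ∀ t, t₂ ≤ t → xf_lb t = g₀ + v_f' * t₂ +
        v_f' * min (t - t₂) (v_f' / a_max)
        - a_max * (min (t - t₂) (v_f' / a_max)) ^ 2 / 2)
    (hg₀ : g₀ ≥ (v_r + v_rρ) * ρ / 2 + v_rρ * t₁ + v_rρ ^ 2 / (2 * a_min)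
        - (v_f' * t₂ + v_f' ^ 2 / (2 * a_max)) + D') :
    ∀ t, 0 ≤ t → xf_lb t - xr_ub t ≥ D' := by
  intro t ht
  have hamax : 0 < a_max := hmin.trans_le hminmax
  have hvrρ0 : 0 ≤ v_rρ := by nlinarith [mul_nonneg hacc hρ]
  have hvfρ : v_f' ≤ v_rρ := by nlinarith [mul_nonneg hacc hρ]
  have hE : (v_r + v_rρ) * ρ / 2 = v_r * ρ + a_acc * ρ ^ 2 / 2 := by rw [hvrρ]; ring
  have hKfKr : v_f' ^ 2 / (2 * a_max) ≤ v_rρ ^ 2 / (2 * a_min) :=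
    div_le_div₀ (by positivity) (by nlinarith) (by linarith) (by linarith)
  rcases le_or_gt t ρ with h1 | h1
  · rw [hxf1 t ht (h1.trans ht₂l), hxr1 t ht h1]
    nlinarith [mul_nonneg (sub_nonneg.2 hvfr) (sub_nonneg.2 h1),
      mul_nonneg (sub_nonneg.2 hvfρ) ht₁,
      mul_nonneg hvf0 (by linarith : (0:ℝ) ≤ ρ + t₁ - t₂),
      mul_nonneg (mul_nonneg hacc (sub_nonneg.2 h1)) (by linarith : (0:ℝ) ≤ ρ + t)]
  · rcases le_or_gt t t₂ with h2 | h2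
    · rw [hxf1 t ht h2, hxr2 t h1.le (h2.trans ht₂u)]
      nlinarith [mul_nonneg (sub_nonneg.2 hvfρ) (sub_nonneg.2 h2),
        mul_nonneg hvrρ0 (by linarith : (0:ℝ) ≤ ρ + t₁ - t₂)]
    · rw [hxf2 t h2.le]
      set u := min (t - t₂) (v_f' / a_max) with hudef
      have hu0 : 0 ≤ u := le_min (by linarith) (by positivity)
      have huv : a_max * u ≤ v_f' := by
        have h := min_le_right (t - t₂) (v_f' / a_max)
        have := (le_div_iff₀ hamax).1 h
        linarith [this]
      rcases le_or_gt t (ρ + t₁) with h3 | h3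
      · rw [hxr2 t h1.le h3]
        nlinarith [mul_nonneg hu0 (by linarith : 0 ≤ v_f' - a_max * u),
          mul_nonneg hvrρ0 (by linarith : (0:ℝ) ≤ ρ + t₁ - t), hKfKr, hE]
      · rw [hxr3 t h3.le]
        set s := min (t - ρ - t₁) (v_rρ / a_min) with hsdef
        have hs0 : 0 ≤ s := le_min (by linarith) (by positivity)
        have hsv : a_min * s ≤ v_rρ := by
          have h := min_le_right (t - ρ - t₁) (v_rρ / a_min)
          have := (le_div_iff₀ hmin).1 h
          linarith [this]
        have hBA : v_f' - a_max * u ≤ v_rρ - a_min * s := by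
          rcases le_total (v_rρ / a_min) (t - ρ - t₁) with hc | hc
          · have hs_eq : s = v_rρ / a_min := min_eq_right hc
            have hdd : v_f' / a_max ≤ v_rρ / a_min :=
              div_le_div₀ hvrρ0 hvfρ hmin hminmax
            have hu_eq : u = v_f' / a_max := min_eq_right (by linarith)
            rw [hs_eq, hu_eq]
            have e1 : a_max * (v_f' / a_max) = v_f' := by field_simp
            have e2 : a_min * (v_rρ / a_min) = v_rρ := by field_simp
            linarith [e1, e2]
          · have hs_eq : s = t - ρ - t₁ := min_eq_left hc
            have hA0' : a_min * (t - ρ - t₁) ≤ v_rρ := by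
              have := (le_div_iff₀ hmin).1 hc
              linarith [this]
            rcases le_total (t - t₂) (v_f' / a_max) with hc2 | hc2
            · have hu_eq : u = t - t₂ := min_eq_left hc2
              rw [hs_eq, hu_eq]
              nlinarith [mul_nonneg (sub_nonneg.2 hminmax) (by linarith : (0:ℝ) ≤ t - t₂),
                mul_nonneg hmin.le (by linarith : (0:ℝ) ≤ ρ + t₁ - t₂)]
            · have hu_eq : u = v_f' / a_max := min_eq_right hc2
              rw [hs_eq, hu_eq]
              have e1 : a_max * (v_f' / a_max) = v_f' := by field_simp
              linarith [e1]
        have hB0 : 0 ≤ v_f' - a_max * u := by linarith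
        have hA0 : 0 ≤ v_rρ - a_min * s := by linarith
        have key : (v_f' - a_max * u) ^ 2 / (2 * a_max) ≤
            (v_rρ - a_min * s) ^ 2 / (2 * a_min) :=
          div_le_div₀ (by positivity) (by nlinarith) (by linarith) (by linarith)
        have eF : (v_f' - a_max * u) ^ 2 / (2 * a_max) =
            v_f' ^ 2 / (2 * a_max) - (v_f' * u - a_max * u ^ 2 / 2) := by
          field_simp; ring
        have eR : (v_rρ - a_min * s) ^ 2 / (2 * a_min) =
            v_rρ ^ 2 / (2 * a_min) - (v_rρ * s - a_min * s ^ 2 / 2) := by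
          field_simp; ring
        linarith [hg₀, key, eF, eR, hE]
end
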